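/- Let b ≥ 2, A, c natural, and ds a list of naturals. Define f A [] c = c and f A (d :: ds) c = ((A * d + c) % b) + b * f A ds ((A * d + c) / b). Then f A ds c = A * Nat.ofDigits b ds + c. In particular f A (Nat.digits b B) 0 = A * B. -/
import Mathlib


def f9 (b A : ℕ) : List ℕ → ℕ → ℕ
  | [], c => c
  | d :: ds, c => (A * d + c) % b + b * f9 b A ds ((A * d + c) / b)

theorem stmt9 (b A B : ℕ) (hb : 2 ≤ b) :
    (∀ (ds : List ℕ) (c : ℕ), f9 b A ds c = A * Nat.ofDigits b ds + c) ∧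
    f9 b A (Nat.digits b B) 0 = A * B := by
  have key : ∀ (ds : List ℕ) (c : ℕ), f9 b A ds c = A * Nat.ofDigits b ds + c := by
    intro ds
    induction ds with
    | nil => intro c; simp [f9, Nat.ofDigits]
    | cons d ds ih =>
      intro c
      simp only [f9, ih, Nat.ofDigits_cons]
      have := Nat.mod_add_div (A * d + c) b
      push_cast
      ring_nf
      omega
  refine ⟨key, ?_⟩
  rw [key, Nat.ofDigits_digits]; ring
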